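/- Let W be a finite Weyl group with set of positive roots Φ₊ and longest element w₀ of length ℓ. Let (i_k)_{k∈ℤ} be a sequence in I such that (i_k, i_{k+1}, …, i_{k+ℓ−1}) is a reduced expression of w₀ for every k ∈ ℤ. Then i_{k+ℓ} = i_k* for all k, where i* is determined by α_{i*} = −w₀(α_i); in particular the sequence is periodic of period 2ℓ. -/

import Mathlib

/-!
Comparing the windows starting at `k` and `k + 1`, `s_{i_k} x = w₀ = x s_{i_{k+ℓ}}`, so
`s_{i_{k+ℓ}} = w₀⁻¹ s_{i_k} w₀`. Everything therefore rests on two facts valid in any Coxeter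
system: an element of maximal length is an involution, and `i ↦ s_i` is injective.

For the first, the simple reflections lift to `(W → ℤˣ) ⋊ W` via `s_i ↦ (δ_{s_i}, s_i)`, where
`δ_x` is `-1` at `x` and `1` elsewhere; the first component `η(w)` of the lift is `-1` exactly at
the left inversions of `w`. If `w₀` has maximal length, every reflection is a left inversion of
`w₀`, so the cocycle rule gives `η(w₀²)(t) = η(w₀)(t) η(w₀)(w₀⁻¹ t w₀) = 1`, and `w₀²` has no
left descent. For the second, in the geometric representation on `ℝ^(B)` with
`θ = π / m_ij`, the product `s_i s_j` sends `sin (φ + θ) α_i + sin φ α_j` to the same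
expression with `φ + 2θ` in place of `φ`, and it fixes the common kernel of the two reflections.
Hence `(s_i s_j)^m_ij = 1`, while `s_i α_i = -α_i ≠ s_j α_i`.
-/

open Real

theorem apply_add_eq_conj_of_forall_prod_ofFn_eq {G : Type*} [Group G] {g : ℤ → G} {n : ℕ}
    {a : G} (h : ∀ k : ℤ, (List.ofFn fun t : Fin n => g (k + (t : ℕ))).prod = a) (k : ℤ) :
    g (k + n) = a⁻¹ * g k * a := by
  cases n with
  | zero =>
    obtain rfl : a = 1 := by simpa using (h k).symm
    simp
  | succ n =>
    have hfirst : g k * (List.ofFn fun t : Fin n => g (k + 1 + (t : ℕ))).prod = a := by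
      rw [← h k, List.ofFn_succ, List.prod_cons]
      refine congrArg₂ (· * ·) (by simp)
        (congrArg List.prod (congrArg List.ofFn (funext fun t => ?_)))
      exact congrArg g (by push_cast [Fin.val_succ]; ring)
    have hlast :
        (List.ofFn fun t : Fin n => g (k + 1 + (t : ℕ))).prod * g (k + (n + 1 : ℕ)) = a := by
      rw [← h (k + 1), List.ofFn_succ', List.prod_concat]
      exact congrArg₂ (· * ·) rfl (congrArg g (by push_cast [Fin.val_last]; ring))
    rw [eq_inv_mul_of_mul_eq hlast, eq_inv_mul_of_mul_eq hfirst]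
    group

abbrev conjArrow (W : Type*) [Group W] : W →* MulAut (W → ℤˣ) :=
  mulAutArrow.comp ConjAct.toConjAct.toMonoidHom

section conjArrow
variable {W : Type*} [Group W]

theorem conjArrow_apply (u : W) (F : W → ℤˣ) (t : W) : conjArrow W u F t = F (u⁻¹ * t * u) := by
  rw [MonoidHom.comp_apply, mulAutArrow_apply_apply]
  show F ((ConjAct.toConjAct u)⁻¹ • t) = _
  rw [← ConjAct.toConjAct_inv, ConjAct.toConjAct_smul, inv_inv]

theorem conjArrow_mulSingle [DecidableEq W] (u x : W) (a : ℤˣ) :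
    conjArrow W u (Pi.mulSingle x a) = Pi.mulSingle (u * x * u⁻¹) a := by
  funext t
  simp only [conjArrow_apply, Pi.mulSingle_apply]
  congr 1
  rw [mul_assoc, inv_mul_eq_iff_eq_mul, ← eq_mul_inv_iff_mul_eq]

end conjArrow

theorem List.mem_of_prod_map_mulSingle_apply_ne_one {α M : Type*} [DecidableEq α] [Monoid M]
    {l : List α} {a : M} {t : α} (h : (l.map fun x => Pi.mulSingle x a).prod t ≠ 1) : t ∈ l := by
  contrapose! h
  rw [Pi.list_prod_apply, List.map_map]
  exact List.prod_eq_one <| List.forall_mem_map.mpr fun x hx =>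
    Pi.mulSingle_eq_of_ne (M := fun _ => M) (fun hxt : t = x => h (hxt ▸ hx)) a

namespace Module

variable {V : Type*} [AddCommGroup V] [Module ℝ V] {x y : V} {f g : Dual ℝ V}
  (hf : f x = 2) (hg : g y = 2)

section
variable {θ : ℝ} (hfy : f y = -2 * cos θ) (hgx : g x = -2 * cos θ)
include hfy hgx

theorem reflection_mul_reflection_sin_smul_add (φ : ℝ) :
    (reflection hf * reflection hg) (sin (φ + θ) • x + sin φ • y) =
      sin (φ + 2 * θ + θ) • x + sin (φ + 2 * θ) • y := by
  have hrec : ∀ a, sin (a + θ) = 2 * cos θ * sin a - sin (a - θ) := fun a => by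
    rw [sin_add, sin_sub]; ring
  have h2 : sin (φ + 2 * θ) = 2 * cos θ * sin (φ + θ) - sin φ := by
    rw [show φ + 2 * θ = φ + θ + θ by ring, hrec, add_sub_cancel_right]
  have h3 : sin (φ + 2 * θ + θ) = 2 * cos θ * sin (φ + 2 * θ) - sin (φ + θ) := by
    rw [hrec, show φ + 2 * θ - θ = φ + θ by ring]
  simp only [LinearEquiv.mul_apply, reflection_apply, map_add, map_smul, map_sub, hf, hg, hfy, hgx,
    h2, h3]
  match_scalars <;> ring

theorem reflection_mul_reflection_pow_sin_smul_add (n : ℕ) (φ : ℝ) :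
    ((reflection hf * reflection hg) ^ n) (sin (φ + θ) • x + sin φ • y) =
      sin (φ + 2 * n * θ + θ) • x + sin (φ + 2 * n * θ) • y := by
  induction n with
  | zero => simp
  | succ n ih =>
    rw [pow_succ', LinearEquiv.mul_apply, ih,
      reflection_mul_reflection_sin_smul_add hf hg hfy hgx]
    push_cast
    ring_nf

end

theorem Dual.exists_apply_sub_smul_sub_smul_eq_zero {K V : Type*} [Field K] [AddCommGroup V]
    [Module K V] {f g : Dual K V} {x y : V} (hdet : f x * g y - f y * g x ≠ 0) (z : V) :
    ∃ a b : K, f (z - a • x - b • y) = 0 ∧ g (z - a • x - b • y) = 0 := by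
  refine ⟨(f z * g y - f y * g z) / (f x * g y - f y * g x),
    (f x * g z - f z * g x) / (f x * g y - f y * g x), ?_, ?_⟩ <;>
  · simp only [map_sub, map_smul, smul_eq_mul]
    rw [div_mul_eq_mul_div, div_mul_eq_mul_div, sub_sub, ← add_div, sub_eq_zero, eq_div_iff hdet]
    ring

theorem reflection_mul_reflection_pow_eq_one {θ : ℝ} (hfy : f y = -2 * cos θ)
    (hgx : g x = -2 * cos θ) (hsin : sin θ ≠ 0) {m : ℕ} (hm : m * θ = π) :
    (reflection hf * reflection hg) ^ m = 1 := by
  set P := reflection hf * reflection hg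
  have hperiod : ∀ φ, (P ^ m) (sin (φ + θ) • x + sin φ • y) = sin (φ + θ) • x + sin φ • y := by
    intro φ
    rw [reflection_mul_reflection_pow_sin_smul_add hf hg hfy hgx, mul_assoc, hm,
      show φ + 2 * π + θ = φ + θ + 2 * π by ring, sin_add_two_pi, sin_add_two_pi]
  have hx : (P ^ m) x = x := by
    have := hperiod 0
    simp only [zero_add, sin_zero, zero_smul, add_zero, map_smul] at this
    exact smul_right_injective V hsin this
  have hy : (P ^ m) y = y := by
    have := hperiod (-θ)
    simp only [neg_add_cancel, sin_zero, zero_smul, zero_add, sin_neg, neg_smul, map_neg,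
      map_smul, neg_inj] at this
    exact smul_right_injective V hsin this
  have hdet : f x * g y - f y * g x ≠ 0 := by
    have : (2 : ℝ) * 2 - -2 * cos θ * (-2 * cos θ) = 4 * sin θ ^ 2 := by rw [sin_sq]; ring
    rw [hf, hg, hfy, hgx, this]
    positivity
  ext z
  obtain ⟨a, b, hfz, hgz⟩ := Dual.exists_apply_sub_smul_sub_smul_eq_zero hdet z
  have hfix : P (z - a • x - b • y) = z - a • x - b • y := by
    rw [LinearEquiv.mul_apply, reflection_apply _ hg, hgz, zero_smul, sub_zero,
      reflection_apply _ hf, hfz, zero_smul, sub_zero]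
  have hfix_pow : (P ^ m) (z - a • x - b • y) = z - a • x - b • y := by
    rw [LinearEquiv.pow_apply, Function.iterate_fixed hfix]
  calc (P ^ m) z = (P ^ m) (z - a • x - b • y) + a • (P ^ m) x + b • (P ^ m) y := by
        simp only [map_sub, map_smul]; abel
    _ = z := by rw [hfix_pow, hx, hy]; abel

end Module

namespace CoxeterMatrix

variable {B : Type*} (M : CoxeterMatrix B)

-- `cosineForm i = 2 B(α_i, -)` for the Tits form `B(α_i, α_j) = -cos (π / m_ij)`; since
-- `π / 0 = 0`, an absent relation `M i j = 0` gives `B(α_i, α_j) = -1`, as it should.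
noncomputable def cosineForm (i : B) : Module.Dual ℝ (B →₀ ℝ) :=
  Finsupp.linearCombination ℝ fun j => -2 * cos (π / M i j)

theorem cosineForm_single (i j : B) :
    M.cosineForm i (Finsupp.single j 1) = -2 * cos (π / M i j) := by
  simp [cosineForm]

theorem cosineForm_single_self (i : B) : M.cosineForm i (Finsupp.single i 1) = 2 := by
  simp [cosineForm_single]

noncomputable def geometricReflection (i : B) : (B →₀ ℝ) ≃ₗ[ℝ] (B →₀ ℝ) :=
  Module.reflection (M.cosineForm_single_self i)

theorem isLiftable_geometricReflection : M.IsLiftable M.geometricReflection := by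
  intro i j
  obtain h0 | h1 | h2 : M i j = 0 ∨ M i j = 1 ∨ 2 ≤ M i j := by omega
  · rw [h0, pow_zero]
  · obtain rfl : i = j := by_contra fun hne => M.off_diagonal i j hne h1
    rw [h1, pow_one]
    refine LinearEquiv.ext fun v => ?_
    rw [LinearEquiv.mul_apply]
    exact Module.involutive_reflection _ v
  · have hm : (0 : ℝ) < M i j := by exact_mod_cast (by omega : 0 < M i j)
    refine Module.reflection_mul_reflection_pow_eq_one _ _ (θ := π / M i j)
      (M.cosineForm_single i j) (by rw [cosineForm_single, M.symmetric])
      (sin_pos_of_pos_of_lt_pi (by positivity) ?_).ne' (mul_div_cancel₀ _ hm.ne')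
    rw [div_lt_iff₀ hm]
    nlinarith [pi_pos, show (2 : ℝ) ≤ M i j by exact_mod_cast h2]

end CoxeterMatrix

namespace CoxeterSystem

variable {B W : Type*} [Group W] {M : CoxeterMatrix B} (cs : CoxeterSystem M W)

theorem prod_map_alternatingWord {G : Type*} [Monoid G] (f : B → G) (i j : B) (p : ℕ) :
    ((alternatingWord i j (2 * p)).map f).prod = (f i * f j) ^ p := by
  induction p with
  | zero => simp [alternatingWord]
  | succ p ih =>
    rw [show 2 * (p + 1) = 2 * p + 1 + 1 by ring, alternatingWord_succ, alternatingWord_succ]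
    simp [ih, pow_succ]

theorem exists_leftInvSeq_alternatingWord_eq_append (i j : B) :
    ∃ L : List W, cs.leftInvSeq (alternatingWord i j (2 * M i j)) = L ++ L := by
  set l := cs.leftInvSeq (alternatingWord i j (2 * M i j))
  have hlen : l.length = 2 * M i j := by simp [l]
  refine ⟨l.take (M i j), ?_⟩
  conv_lhs => rw [← List.take_append_drop (M i j) l]
  congr 1
  refine List.ext_getElem (by simp; omega) fun k hk _ => ?_
  simp only [List.length_drop] at hk
  simp only [List.getElem_drop, List.getElem_take, l]
  rw [cs.getElem_leftInvSeq_alternatingWord i j _ _ (by omega),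
    cs.getElem_leftInvSeq_alternatingWord i j _ _ (by omega),
    prod_alternatingWord_eq_mul_pow, prod_alternatingWord_eq_mul_pow,
    show (2 * (M i j + k) + 1) / 2 = M i j + k by omega, show (2 * k + 1) / 2 = k by omega,
    pow_add, M.symmetric, cs.simple_mul_simple_pow, one_mul]
  simp

section inversionSign

variable [DecidableEq W]

def inversionSignGen (i : B) : (W → ℤˣ) ⋊[conjArrow W] W :=
  ⟨Pi.mulSingle (cs.simple i) (-1), cs.simple i⟩

theorem prod_map_inversionSignGen (ω : List B) :
    (ω.map cs.inversionSignGen).prod =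
      ⟨((cs.leftInvSeq ω).map fun t => Pi.mulSingle t (-1)).prod, cs.wordProd ω⟩ := by
  induction ω with
  | nil => rfl
  | cons i ω ih =>
    rw [List.map_cons, List.prod_cons, ih]
    refine SemidirectProduct.ext ?_ ?_
    · rw [SemidirectProduct.mul_left]
      simp only [inversionSignGen, leftInvSeq, List.map_cons, List.prod_cons, List.map_map,
        map_list_prod]
      congr 2
      refine List.map_congr_left fun t _ => ?_
      rw [Function.comp_apply, Function.comp_apply, conjArrow_mulSingle, MulAut.conj_apply,
        inv_simple]
    · simp [inversionSignGen, wordProd_cons]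

theorem isLiftable_inversionSignGen : M.IsLiftable cs.inversionSignGen := by
  intro i j
  rw [← prod_map_alternatingWord, prod_map_inversionSignGen]
  obtain ⟨L, hL⟩ := cs.exists_leftInvSeq_alternatingWord_eq_append i j
  refine SemidirectProduct.ext ?_ ?_
  · rw [hL, List.map_append, List.prod_append]
    exact funext fun t => Int.units_mul_self _
  · rw [prod_alternatingWord_eq_mul_pow, if_pos (even_two_mul _),
      Nat.mul_div_cancel_left _ two_pos, one_mul, cs.simple_mul_simple_pow]
    rfl

def inversionSignHom : W →* (W → ℤˣ) ⋊[conjArrow W] W :=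
  cs.lift ⟨cs.inversionSignGen, cs.isLiftable_inversionSignGen⟩

def inversionSign (w : W) : W → ℤˣ := (cs.inversionSignHom w).left

theorem inversionSignHom_wordProd (ω : List B) :
    cs.inversionSignHom (cs.wordProd ω) =
      ⟨((cs.leftInvSeq ω).map fun t => Pi.mulSingle t (-1)).prod, cs.wordProd ω⟩ := by
  rw [← prod_map_inversionSignGen, wordProd, map_list_prod, List.map_map]
  congr 2
  funext i
  exact cs.lift_apply_simple _ i

theorem inversionSignHom_right (w : W) : (cs.inversionSignHom w).right = w := by
  obtain ⟨ω, rfl⟩ := cs.wordProd_surjective w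
  rw [inversionSignHom_wordProd]

theorem inversionSign_mul (u v t : W) :
    cs.inversionSign (u * v) t = cs.inversionSign u t * cs.inversionSign v (u⁻¹ * t * u) := by
  simp only [inversionSign, map_mul, SemidirectProduct.mul_left, inversionSignHom_right,
    Pi.mul_apply, conjArrow_apply]

theorem inversionSign_simple (i : B) :
    cs.inversionSign (cs.simple i) = Pi.mulSingle (cs.simple i) (-1) := by
  simp [inversionSign, inversionSignHom, inversionSignGen]

theorem inversionSign_one : cs.inversionSign 1 = 1 := by
  simp [inversionSign]

theorem IsReflection.inversionSign_self {t : W} (ht : cs.IsReflection t) :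
    cs.inversionSign t t = -1 := by
  obtain ⟨u, i, rfl⟩ := ht
  have hu := cs.inversionSign_mul u u⁻¹ (u * cs.simple i * u⁻¹)
  have h₁ : u⁻¹ * (u * cs.simple i * u⁻¹) * u = cs.simple i := by group
  have h₂ : (u * cs.simple i)⁻¹ * (u * cs.simple i * u⁻¹) * (u * cs.simple i) = cs.simple i := by
    group
  rw [mul_inv_cancel, inversionSign_one, h₁] at hu
  rw [inversionSign_mul, inversionSign_mul, inversionSign_simple, h₁, h₂, Pi.mulSingle_eq_same,
    mul_neg_one, neg_mul, ← hu]
  rfl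

theorem isLeftInversion_of_inversionSign_eq_neg_one {w t : W} (h : cs.inversionSign w t = -1) :
    cs.IsLeftInversion w t := by
  obtain ⟨ω, hω, rfl⟩ := cs.exists_isReduced w
  rw [inversionSign, inversionSignHom_wordProd] at h
  refine cs.isLeftInversion_of_mem_leftInvSeq hω
    (List.mem_of_prod_map_mulSingle_apply_ne_one (a := (-1 : ℤˣ)) ?_)
  exact fun h1 => absurd (h.symm.trans h1) (by decide)

theorem isLeftInversion_iff_inversionSign_eq_neg_one {w t : W} (ht : cs.IsReflection t) :
    cs.IsLeftInversion w t ↔ cs.inversionSign w t = -1 := by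
  refine ⟨fun hwt => ?_, cs.isLeftInversion_of_inversionSign_eq_neg_one⟩
  by_contra hne
  have h1 : cs.inversionSign w t = 1 := (Int.units_eq_one_or _).resolve_right hne
  have htwt : cs.IsLeftInversion (t * w) t := by
    refine cs.isLeftInversion_of_inversionSign_eq_neg_one ?_
    rw [inversionSign_mul, ht.inversionSign_self, inv_mul_cancel, one_mul, h1, mul_one]
  have := htwt.2
  rw [← mul_assoc, ht.mul_self, one_mul] at this
  exact absurd hwt.2 (lt_asymm this)

end inversionSign

theorem mul_self_eq_one_of_forall_length_le {w₀ : W} (hw₀ : ∀ w, cs.length w ≤ cs.length w₀) :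
    w₀ * w₀ = 1 := by
  classical
  have hsign : ∀ t, cs.IsReflection t → cs.inversionSign w₀ t = -1 := fun t ht =>
    (cs.isLeftInversion_iff_inversionSign_eq_neg_one ht).mp
      ⟨ht, (hw₀ _).lt_of_ne (ht.length_mul_right_ne w₀)⟩
  by_contra hne
  obtain ⟨i, hi⟩ := cs.exists_leftDescent_of_ne_one hne
  rw [← isLeftInversion_simple_iff_isLeftDescent, isLeftInversion_iff_inversionSign_eq_neg_one _
    (cs.isReflection_simple i), inversionSign_mul, hsign _ (cs.isReflection_simple i),
    hsign _ (by simpa using (cs.isReflection_simple i).conj w₀⁻¹)] at hi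
  exact absurd hi (by decide)

theorem simple_injective : Function.Injective cs.simple := by
  intro i j hij
  by_contra hne
  have h := congrArg (cs.lift ⟨M.geometricReflection, M.isLiftable_geometricReflection⟩) hij
  simp only [lift_apply_simple] at h
  have hi := congrArg (· (Finsupp.single i 1) i) h
  norm_num [CoxeterMatrix.geometricReflection, Module.reflection_apply, hne] at hi

end CoxeterSystem

theorem stmt15_general {B W : Type*} [Group W] {M : CoxeterMatrix B} (cs : CoxeterSystem M W)
    (w₀ : W) (hw₀ : ∀ w : W, cs.length w ≤ cs.length w₀)
    (ℓ : ℕ)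
    (idx : ℤ → B)
    (hprod : ∀ k : ℤ, cs.wordProd (List.ofFn fun t : Fin ℓ => idx (k + (t : ℕ))) = w₀) :
    (∀ k : ℤ, cs.simple (idx (k + (ℓ : ℤ))) = w₀ * cs.simple (idx k) * w₀⁻¹) ∧
    (∀ k : ℤ, idx (k + 2 * (ℓ : ℤ)) = idx k) := by
  have hsq : w₀ * w₀ = 1 := cs.mul_self_eq_one_of_forall_length_le hw₀
  have hshift : ∀ k : ℤ, cs.simple (idx (k + ℓ)) = w₀ * cs.simple (idx k) * w₀⁻¹ := by
    intro k
    simpa [inv_eq_of_mul_eq_one_right hsq] using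
      apply_add_eq_conj_of_forall_prod_ofFn_eq (g := fun k => cs.simple (idx k)) (a := w₀)
        (fun k => by rw [← hprod k, CoxeterSystem.wordProd, List.map_ofFn]; rfl) k
  refine ⟨hshift, fun k => cs.simple_injective ?_⟩
  calc cs.simple (idx (k + 2 * ℓ)) = (w₀ * w₀) * cs.simple (idx k) * (w₀ * w₀)⁻¹ := by
        rw [two_mul, ← add_assoc, hshift, hshift]; group
    _ = cs.simple (idx k) := by rw [hsq, one_mul, inv_one, mul_one]

/-- Let `(i_k)_{k ∈ ℤ}` be a bi-infinite sequence in `I` such that every window of `ℓ`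
consecutive entries is a reduced expression of the longest element `w₀` of a finite
Weyl group.  Then `i_{k+ℓ} = i_k*` for all `k`, where the involution `*` is
characterized (equivalently to `α_{i*} = −w₀(α_i)`) by `s_{i*} = w₀ s_i w₀⁻¹`;
in particular the sequence is periodic of period `2ℓ`. -/
theorem stmt15 {B W : Type*} [Group W] {M : CoxeterMatrix B} (cs : CoxeterSystem M W)
    [Finite W] (w₀ : W) (hw₀ : ∀ w : W, cs.length w ≤ cs.length w₀)
    (ℓ : ℕ) (hℓ : ℓ = cs.length w₀)
    (idx : ℤ → B)
    (hred : ∀ k : ℤ, cs.IsReduced (List.ofFn fun t : Fin ℓ => idx (k + (t : ℕ))))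
    (hprod : ∀ k : ℤ, cs.wordProd (List.ofFn fun t : Fin ℓ => idx (k + (t : ℕ))) = w₀) :
    (∀ k : ℤ, cs.simple (idx (k + (ℓ : ℤ))) = w₀ * cs.simple (idx k) * w₀⁻¹) ∧
    (∀ k : ℤ, idx (k + 2 * (ℓ : ℤ)) = idx k) :=
  stmt15_general cs w₀ hw₀ ℓ idx hprod
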